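/- If the fourth spectral moment λ₄ := ∫_ℝ λ⁴ dμ(λ) is infinite, then L(τ)/τ = (r''(τ) − r''(0))/τ² tends to +∞ as τ → 0⁺. -/

import Mathlib

open MeasureTheory ProbabilityTheory Set Filter Topology Real
open scoped ENNReal NNReal

/-- The correlation function `r(τ) = ∫ cos(λτ) dμ(λ)` associated with a spectral measure `μ`. -/
noncomputable def specCorr (μ : MeasureTheory.Measure ℝ) (τ : ℝ) : ℝ :=
  ∫ l : ℝ, Real.cos (l * τ) ∂μ

/-- The Geman function `L(τ) = (r''(τ) − r''(0))/τ`. -/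
noncomputable def gemanL (μ : MeasureTheory.Measure ℝ) (τ : ℝ) : ℝ :=
  (deriv (deriv (specCorr μ)) τ - deriv (deriv (specCorr μ)) 0) / τ

/-- `σ²(τ) = −r''(0) − r'(τ)²/(1 − r²(τ))`, the conditional variance of `Ẋ₀` given
`X₀` and `X_τ`. -/
noncomputable def sigmaSq (μ : MeasureTheory.Measure ℝ) (τ : ℝ) : ℝ :=
  -(deriv (deriv (specCorr μ)) 0) - (deriv (specCorr μ) τ) ^ 2 / (1 - (specCorr μ τ) ^ 2)

/-- Condition (1) of Kratz–León: near `0`, `r(τ) = 1 + (r''(0)/2)τ² + θ(τ)` with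
`θ(τ) > 0`, `θ(τ)/τ² → 0`, `θ'(τ)/τ → 0` and `θ''(τ) → 0` as `τ → 0⁺`;
`r` is moreover twice differentiable. -/
def ConditionOne (r : ℝ → ℝ) : Prop :=
  (∀ τ : ℝ, DifferentiableAt ℝ r τ ∧ DifferentiableAt ℝ (deriv r) τ) ∧
  ∃ δ₀ > (0:ℝ), ∃ θ : ℝ → ℝ,
    (∀ τ ∈ Set.Ioc (0:ℝ) δ₀,
        r τ = 1 + (deriv (deriv r) 0 / 2) * τ ^ 2 + θ τ ∧ 0 < θ τ) ∧
    Filter.Tendsto (fun τ => θ τ / τ ^ 2) (nhdsWithin 0 (Set.Ioi 0)) (nhds 0) ∧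
    Filter.Tendsto (fun τ => deriv θ τ / τ) (nhdsWithin 0 (Set.Ioi 0)) (nhds 0) ∧
    Filter.Tendsto (fun τ => deriv (deriv θ) τ) (nhdsWithin 0 (Set.Ioi 0)) (nhds 0)

/-! Differentiating twice under the integral sign gives `r''(τ) = -∫ λ² cos (λτ) dμ`, so
`L(τ)/τ = ∫ λ² (1 - cos (λτ)) / τ² dμ`. Jordan's inequality `1 - cos x ≥ 2x²/π²` for `|x| ≤ π`
bounds this below by `(2/π²) ∫_{|λ| ≤ π/τ} λ⁴ dμ`, which tends to `λ₄ = ∞` as `τ → 0⁺` by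
monotone convergence. -/

section SpectralMeasure

variable {μ : Measure ℝ}

lemma integrable_id_of_integrable_sq [IsFiniteMeasure μ]
    (h2 : Integrable (fun l : ℝ => l ^ 2) μ) : Integrable (fun l : ℝ => l) μ :=
  ((memLp_two_iff_integrable_sq aestronglyMeasurable_id).2 h2).integrable one_le_two

lemma hasDerivAt_specCorr [IsFiniteMeasure μ] (h1 : Integrable (fun l : ℝ => l) μ) (τ : ℝ) :
    HasDerivAt (specCorr μ) (-∫ l, l * sin (l * τ) ∂μ) τ := by
  rw [← integral_neg]
  refine (hasDerivAt_integral_of_dominated_loc_of_deriv_le (bound := fun l => |l|)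
    (F := fun t l => cos (l * t)) (F' := fun t l => -(l * sin (l * t)))
    univ_mem (.of_forall fun _ => by fun_prop) ?_ (by fun_prop) ?_ h1.abs ?_).2
  · exact (integrable_const 1).mono' (by fun_prop)
      (.of_forall fun l => by simpa using abs_cos_le_one _)
  · refine .of_forall fun l t _ => ?_
    simpa [abs_mul] using mul_le_of_le_one_right (abs_nonneg l) (abs_sin_le_one (l * t))
  · refine .of_forall fun l t _ => ?_
    simpa [mul_comm] using ((hasDerivAt_id t).const_mul l).cos

lemma hasDerivAt_integral_mul_sin (h1 : Integrable (fun l : ℝ => l) μ)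
    (h2 : Integrable (fun l : ℝ => l ^ 2) μ) (τ : ℝ) :
    HasDerivAt (fun t => ∫ l, l * sin (l * t) ∂μ) (∫ l, l ^ 2 * cos (l * τ) ∂μ) τ := by
  refine (hasDerivAt_integral_of_dominated_loc_of_deriv_le (bound := fun l => l ^ 2)
    (F := fun t l => l * sin (l * t)) (F' := fun t l => l ^ 2 * cos (l * t))
    univ_mem (.of_forall fun _ => by fun_prop) ?_ (by fun_prop) ?_ h2 ?_).2
  · refine h1.abs.mono' (by fun_prop) (.of_forall fun l => ?_)
    simpa [abs_mul] using mul_le_of_le_one_right (abs_nonneg l) (abs_sin_le_one (l * τ))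
  · refine .of_forall fun l t _ => ?_
    simpa [abs_mul] using mul_le_of_le_one_right (sq_nonneg l) (abs_cos_le_one (l * t))
  · refine .of_forall fun l t _ => ?_
    refine ((((hasDerivAt_id t).const_mul l).sin).const_mul l).congr_deriv ?_
    simp only [id, mul_one]
    ring

lemma deriv_deriv_specCorr [IsFiniteMeasure μ] (h2 : Integrable (fun l : ℝ => l ^ 2) μ)
    (τ : ℝ) : deriv (deriv (specCorr μ)) τ = -∫ l, l ^ 2 * cos (l * τ) ∂μ := by
  have h1 := integrable_id_of_integrable_sq h2
  have hd : deriv (specCorr μ) = fun t => -∫ l, l * sin (l * t) ∂μ :=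
    funext fun t => (hasDerivAt_specCorr h1 t).deriv
  rw [hd]
  exact (hasDerivAt_integral_mul_sin h1 h2 τ).neg.deriv

lemma integrable_sq_mul_cos (h2 : Integrable (fun l : ℝ => l ^ 2) μ) (τ : ℝ) :
    Integrable (fun l : ℝ => l ^ 2 * cos (l * τ)) μ :=
  h2.mono' (by fun_prop) (.of_forall fun l => by
    simpa [abs_mul] using mul_le_of_le_one_right (sq_nonneg l) (abs_cos_le_one (l * τ)))

lemma gemanL_div_eq [IsFiniteMeasure μ] (h2 : Integrable (fun l : ℝ => l ^ 2) μ) (τ : ℝ) :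
    gemanL μ τ / τ = ∫ l, l ^ 2 * (1 - cos (l * τ)) / τ ^ 2 ∂μ := by
  rw [gemanL, deriv_deriv_specCorr h2, deriv_deriv_specCorr h2, integral_div, div_div, ← sq,
    neg_sub_neg, ← integral_sub (integrable_sq_mul_cos h2 0) (integrable_sq_mul_cos h2 τ)]
  congr 2 with l
  simp only [mul_zero, cos_zero]
  ring

lemma two_div_pi_sq_mul_setIntegral_pow_four_le_gemanL_div [IsFiniteMeasure μ]
    (h2 : Integrable (fun l : ℝ => l ^ 2) μ) {τ : ℝ} (hτ : 0 < τ) :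
    2 / π ^ 2 * ∫ l in Icc (-(π / τ)) (π / τ), l ^ 4 ∂μ ≤ gemanL μ τ / τ := by
  have hint : Integrable (fun l : ℝ => l ^ 2 * (1 - cos (l * τ)) / τ ^ 2) μ := by
    refine ((h2.sub (integrable_sq_mul_cos h2 τ)).div_const (τ ^ 2)).congr (.of_forall fun l => ?_)
    simp only [Pi.sub_apply]
    ring
  rw [gemanL_div_eq h2, ← integral_const_mul]
  calc ∫ l in Icc (-(π / τ)) (π / τ), 2 / π ^ 2 * l ^ 4 ∂μ
      ≤ ∫ l in Icc (-(π / τ)) (π / τ), l ^ 2 * (1 - cos (l * τ)) / τ ^ 2 ∂μ := by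
        refine setIntegral_mono_on ?_ hint.integrableOn measurableSet_Icc fun l hl => ?_
        · exact (continuous_const.mul (continuous_pow 4)).integrableOn_Icc
        have hlτ : |l * τ| ≤ π := by
          rw [abs_mul, abs_of_pos hτ, ← le_div_iff₀ hτ]
          exact abs_le.2 hl
        have := cos_le_one_sub_mul_cos_sq hlτ
        rw [le_div_iff₀ (by positivity)]
        nlinarith [sq_nonneg l]
    _ ≤ ∫ l, l ^ 2 * (1 - cos (l * τ)) / τ ^ 2 ∂μ :=
        setIntegral_le_integral hint (.of_forall fun l => by
          have := cos_le_one (l * τ)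
          simp only [Pi.zero_apply]
          positivity)

end SpectralMeasure

lemma tendsto_setIntegral_Icc_atTop_of_lintegral_eq_top {μ : Measure ℝ}
    [IsFiniteMeasureOnCompacts μ] {f : ℝ → ℝ} (hf : Continuous f) (hf₀ : ∀ x, 0 ≤ f x)
    (htop : ∫⁻ x, ENNReal.ofReal (f x) ∂μ = ⊤) :
    Tendsto (fun R => ∫ x in Icc (-R) R, f x ∂μ) atTop atTop := by
  rw [← ENNReal.tendsto_ofReal_nhds_top]
  have hmono : Monotone fun R : ℝ => Icc (-R) R :=
    fun _ _ h => Icc_subset_Icc (neg_le_neg h) h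
  have hunion : ⋃ R : ℝ, Icc (-R) R = univ :=
    eq_univ_of_forall fun x => mem_iUnion.2 ⟨|x|, abs_le.1 le_rfl⟩
  have key := tendsto_measure_iUnion_atTop (μ := μ.withDensity fun x => ENNReal.ofReal (f x)) hmono
  rw [hunion, withDensity_apply _ MeasurableSet.univ, Measure.restrict_univ, htop] at key
  refine key.congr fun R => ?_
  rw [Function.comp_apply, withDensity_apply _ measurableSet_Icc,
    ofReal_integral_eq_lintegral_ofReal hf.integrableOn_Icc (.of_forall fun x => hf₀ x)]

theorem gemanL_div_tendsto_atTop_of_fourth_moment_infinite_general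
    (μ : Measure ℝ) [IsProbabilityMeasure μ]
    (hlam2fin : Integrable (fun l : ℝ => l ^ 2) μ)
    (hlam4inf : ∫⁻ l : ℝ, ENNReal.ofReal (l ^ 4) ∂μ = ⊤) :
    Tendsto (fun τ => gemanL μ τ / τ) (𝓝[>] 0) atTop := by
  have hcutoff : Tendsto (fun τ : ℝ => π / τ) (𝓝[>] 0) atTop :=
    tendsto_inv_nhdsGT_zero.const_mul_atTop pi_pos
  have hmoment := (tendsto_setIntegral_Icc_atTop_of_lintegral_eq_top (continuous_pow 4)
    (fun l => by positivity) hlam4inf).comp hcutoff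
  refine tendsto_atTop_mono' _ ?_
    (hmoment.const_mul_atTop (show (0 : ℝ) < 2 / π ^ 2 by positivity))
  filter_upwards [self_mem_nhdsWithin] with τ hτ
  exact two_div_pi_sq_mul_setIntegral_pow_four_le_gemanL_div hlam2fin hτ

/-- if the fourth spectral moment `λ₄ = ∫ λ⁴ dμ` is infinite, then
`L(τ)/τ = (r''(τ) − r''(0))/τ² → +∞` as `τ → 0⁺`. -/
theorem gemanL_div_tendsto_atTop_of_fourth_moment_infinite
    (μ : Measure ℝ) [IsProbabilityMeasure μ]
    (hsymm : Measure.map (fun l => -l) μ = μ)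
    (hlam2fin : Integrable (fun l : ℝ => l ^ 2) μ)
    (hlam2pos : 0 < ∫ l : ℝ, l ^ 2 ∂μ)
    (hlam4inf : ∫⁻ l : ℝ, ENNReal.ofReal (l ^ 4) ∂μ = ⊤) :
    Tendsto (fun τ => gemanL μ τ / τ) (𝓝[>] 0) atTop :=
  gemanL_div_tendsto_atTop_of_fourth_moment_infinite_general μ hlam2fin hlam4inf
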